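/- arXiv:0907.5114 — 2 statements merged into one kernel-verified Lean document; each statement's English description precedes it below -/
import Mathlib

section
/- Let p, q be integers with 1 ≤ p < q and let α ∈ ℤ with |α| ≥ 2q. Then there exists a geodesic word representing a^α in BS(p,q) that contains the letter t; in fact there is a geodesic word representing a^α of the form t^k a^{α_0} t⁻¹ a^{γ_1} t⁻¹ ⋯ t⁻¹ a^{γ_k} with k ≥ 1. -/
/-!
Call *mountain* a word `t^k a^β₀ t⁻¹ a^γ₁ ⋯ t⁻¹ a^γ_k`, and let `M α` be the least length of
a mountain representing `a^α`. Stacking two mountains (after padding the lower one with empty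
levels) shows that `M` is subadditive; appending or removing a top level gives
`M (q c) ≤ M (p c) + 2` and `M (p c) ≤ M (q c)`. Write an arbitrary word as
`a^b t^u₁ a^x₁ ⋯ t^uₙ a^xₙ`: its length is at least `M b + Σ (1 + M xᵢ)`, and these inequalities
say that this potential does not increase when a pinch `t^u a^x t^(-u)` is collapsed to a power
of `a`. By Britton's lemma a word representing `a^α` can be collapsed completely, so it has length
at least `M α`: minimal mountains are geodesic. Finally, for `|α| ≥ 2q` write `α = q m + r` with
`|m| ≥ 2` and `|r| < q`; then `t a^(p m) t⁻¹ a^r` is a mountain of length at most `|α|`, so some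
minimal mountain has `k ≥ 1`.
-/

inductive Letter : Type
  | a | A | t | T
  deriving DecidableEq

def bsRel (p q : ℤ) : Set (FreeGroup Bool) :=
  {FreeGroup.of true * (FreeGroup.of false) ^ p * (FreeGroup.of true)⁻¹ * (FreeGroup.of false) ^ (-q)}

abbrev BS (p q : ℤ) := PresentedGroup (bsRel p q)

def evalLetter (p q : ℤ) : Letter → BS p q
  | .a => PresentedGroup.of false
  | .A => (PresentedGroup.of false)⁻¹
  | .t => PresentedGroup.of true
  | .T => (PresentedGroup.of true)⁻¹

def eval (p q : ℤ) (w : List Letter) : BS p q := (w.map (evalLetter p q)).prod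

def aPow (α : ℤ) : List Letter :=
  if 0 ≤ α then List.replicate α.toNat Letter.a else List.replicate (-α).toNat Letter.A

def Geodesic (p q : ℤ) (w : List Letter) : Prop :=
  ∀ v : List Letter, eval p q v = eval p q w → w.length ≤ v.length

/-- Ranking of letters in the order `t < T < a < A`. -/
def letterIdx : Letter → ℕ
  | .t => 0
  | .T => 1
  | .a => 2
  | .A => 3

/-- Length-lexicographical strict order on words, with letters ordered `t < T < a < A`. -/
def llLt (u v : List Letter) : Prop :=
  u.length < v.length ∨
    (u.length = v.length ∧ List.Lex (· < ·) (u.map letterIdx) (v.map letterIdx))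

/-- `IsLlnf p q v w` : `v` is the length-lexicographical normal form of `w`,
i.e. `v` represents the same element as `w` and no word representing this element
precedes `v` in the length-lexicographical order. -/
def IsLlnf (p q : ℤ) (v w : List Letter) : Prop :=
  eval p q v = eval p q w ∧ ∀ u : List Letter, eval p q u = eval p q w → ¬ llLt u v

/-- A word contains no factors `a a⁻¹` or `a⁻¹ a`. -/
def Reduced (w : List Letter) : Prop :=
  (∀ u v : List Letter, w ≠ u ++ [Letter.a, Letter.A] ++ v) ∧
  (∀ u v : List Letter, w ≠ u ++ [Letter.A, Letter.a] ++ v)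

/-- A word is Britton-reduced: it has no factors `a a⁻¹`, `a⁻¹ a`,
`t a^{pμ} t⁻¹` or `t⁻¹ a^{qμ} t` (with `μ ∈ ℤ`). -/
def BrittonReduced (p q : ℤ) (w : List Letter) : Prop :=
  Reduced w ∧
  (∀ u v : List Letter, ∀ μ : ℤ, w ≠ u ++ [Letter.t] ++ aPow (p * μ) ++ [Letter.T] ++ v) ∧
  (∀ u v : List Letter, ∀ μ : ℤ, w ≠ u ++ [Letter.T] ++ aPow (q * μ) ++ [Letter.t] ++ v)

/-- The t-sequence of a word: its subsequence of letters from `{t, t⁻¹}`. -/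
def tSeq (w : List Letter) : List Letter :=
  w.filter (fun c => c == Letter.t || c == Letter.T)

/-- The geodesic length of a group element: the least length of a word representing it. -/
noncomputable def geodesicLength (p q : ℤ) (g : BS p q) : ℕ :=
  sInf {n : ℕ | ∃ w : List Letter, eval p q w = g ∧ w.length = n}

/-- A valley: every prefix has height `≤ 0` and the total height is `0`,
where the height of a prefix is (number of `t`'s) − (number of `t⁻¹`'s). -/
def IsValley (w : List Letter) : Prop :=
  (∀ u v : List Letter, w = u ++ v → u.count Letter.t ≤ u.count Letter.T) ∧
  w.count Letter.t = w.count Letter.T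

/-- The word `t^k a^(β 0) t⁻¹ a^(digit 0) ⋯ t⁻¹ a^(digit (k-1))`, see `Mountain.word`: after
`i` letters `t⁻¹` the prefix read so far equals `t^(k-i) a^(β i)`, which is why `β i` must be a
multiple of `p` below the top level `k`. -/
structure Mountain (p q : ℤ) where
  k : ℕ
  β : ℕ → ℤ
  dvd : ∀ i < k, p ∣ β i

namespace Mountain

variable {p q : ℤ}

def digit (c : Mountain p q) (i : ℕ) : ℤ := c.β (i + 1) - q * (c.β i / p)

def weight (c : Mountain p q) : ℕ :=
  (c.β 0).natAbs + ∑ i ∈ Finset.range c.k, (c.digit i).natAbs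

def cost (c : Mountain p q) : ℕ := 2 * c.k + c.weight

def value (c : Mountain p q) : ℤ := c.β c.k

def word (c : Mountain p q) : List Letter :=
  List.replicate c.k Letter.t ++ aPow (c.β 0) ++
    (List.ofFn fun i : Fin c.k => Letter.T :: aPow (c.digit i)).flatten

lemma cost_eq_natAbs_value {c : Mountain p q} (hk : c.k = 0) : c.cost = c.value.natAbs := by
  simp [cost, weight, value, hk]

def const (α : ℤ) : Mountain p q := ⟨0, fun _ => α, by simp⟩

lemma cost_const (α : ℤ) : (const α : Mountain p q).cost = α.natAbs :=
  cost_eq_natAbs_value rfl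

def pad (c : Mountain p q) : Mountain p q where
  k := c.k + 1
  β
    | 0 => 0
    | i + 1 => c.β i
  dvd
    | 0, _ => dvd_zero p
    | i + 1, h => c.dvd i (by omega)

lemma weight_pad (c : Mountain p q) : c.pad.weight = c.weight := by
  simp only [weight, pad, digit, Finset.sum_range_succ', Int.natAbs_zero, EuclideanDomain.zero_div,
    mul_zero, sub_zero]
  ring

lemma exists_pad (c : Mountain p q) {n : ℕ} (hn : c.k ≤ n) :
    ∃ c' : Mountain p q, c'.k = n ∧ c'.value = c.value ∧ c'.weight = c.weight := by
  induction n, hn using Nat.le_induction with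
  | base => exact ⟨c, rfl, rfl, rfl⟩
  | succ n _ ih =>
    obtain ⟨c', hk, hv, hw⟩ := ih
    exact ⟨c'.pad, by simp [pad, hk], by rw [← hv]; rfl, by rw [weight_pad, hw]⟩

def add (c c' : Mountain p q) (h : c.k = c'.k) : Mountain p q where
  k := c.k
  β := c.β + c'.β
  dvd i hi := dvd_add (c.dvd i hi) (c'.dvd i (h ▸ hi))

lemma value_add (c c' : Mountain p q) (h : c.k = c'.k) :
    (c.add c' h).value = c.value + c'.value := by
  simp [value, add, h]

lemma digit_add (hp : p ≠ 0) (c c' : Mountain p q) (h : c.k = c'.k) {i : ℕ} (hi : i < c.k) :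
    (c.add c' h).digit i = c.digit i + c'.digit i := by
  obtain ⟨m, hm⟩ := c.dvd i hi
  obtain ⟨m', hm'⟩ := c'.dvd i (h ▸ hi)
  simp only [digit, add, Pi.add_apply, hm, hm', ← mul_add, Int.mul_ediv_cancel_left _ hp]
  ring

lemma weight_add_le (hp : p ≠ 0) (c c' : Mountain p q) (h : c.k = c'.k) :
    (c.add c' h).weight ≤ c.weight + c'.weight := by
  have hsum : ∑ i ∈ Finset.range c.k, ((c.add c' h).digit i).natAbs ≤
      ∑ i ∈ Finset.range c.k, (c.digit i).natAbs +
        ∑ i ∈ Finset.range c.k, (c'.digit i).natAbs := by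
    rw [← Finset.sum_add_distrib]
    refine Finset.sum_le_sum fun i hi => ?_
    rw [digit_add hp c c' h (Finset.mem_range.mp hi)]
    exact Int.natAbs_add_le _ _
  have hβ : (c.β 0 + c'.β 0).natAbs ≤ (c.β 0).natAbs + (c'.β 0).natAbs :=
    Int.natAbs_add_le _ _
  simp only [weight, add, Pi.add_apply, ← h] at hsum hβ ⊢
  omega

lemma exists_value_add (hp : p ≠ 0) (c c' : Mountain p q) :
    ∃ d : Mountain p q, d.value = c.value + c'.value ∧ d.cost ≤ c.cost + c'.cost := by
  wlog h : c'.k ≤ c.k generalizing c c'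
  · obtain ⟨d, hv, hc⟩ := this c' c (by omega)
    exact ⟨d, by rw [hv, add_comm], by omega⟩
  obtain ⟨c'', hk, hv, hw⟩ := c'.exists_pad h
  refine ⟨c.add c'' hk.symm, by rw [value_add, hv], ?_⟩
  have := weight_add_le hp c c'' hk.symm
  simp only [cost, add] at this ⊢
  omega

def push (c : Mountain p q) (hc : p ∣ c.value) (y : ℤ) : Mountain p q where
  k := c.k + 1
  β := Function.update c.β (c.k + 1) y
  dvd i hi := by
    rw [Function.update_of_ne (by omega)]
    rcases Nat.lt_succ_iff_lt_or_eq.mp hi with hi | rfl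
    exacts [c.dvd i hi, hc]

lemma value_push (c : Mountain p q) (hc : p ∣ c.value) (y : ℤ) : (c.push hc y).value = y := by
  simp [value, push]

lemma cost_push (c : Mountain p q) (hc : p ∣ c.value) (y : ℤ) :
    (c.push hc y).cost = c.cost + 2 + (y - q * (c.value / p)).natAbs := by
  have hdigit : ∀ i ≤ c.k, (c.push hc y).digit i =
      if i = c.k then y - q * (c.value / p) else c.digit i := by
    intro i hi
    split_ifs with h
    · subst h; simp [digit, push, value]
    · simp [digit, push, Function.update_of_ne (show i + 1 ≠ c.k + 1 by omega),
        Function.update_of_ne (show i ≠ c.k + 1 by omega)]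
  simp only [cost, weight, show (c.push hc y).k = c.k + 1 from rfl]
  rw [Finset.sum_range_succ, hdigit c.k le_rfl, if_pos rfl,
    Finset.sum_congr rfl fun i hi => by
      rw [hdigit i (Finset.mem_range.mp hi).le, if_neg (Finset.mem_range.mp hi).ne]]
  have hβ0 : (c.push hc y).β 0 = c.β 0 := Function.update_of_ne (by omega : 0 ≠ c.k + 1) y _
  rw [hβ0]
  ring

def pop (c : Mountain p q) : Mountain p q where
  k := c.k - 1
  β := c.β
  dvd i hi := c.dvd i (by omega)

lemma cost_pop {c : Mountain p q} (hk : 1 ≤ c.k) :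
    c.cost = c.pop.cost + 2 + (c.digit (c.k - 1)).natAbs := by
  obtain ⟨n, hn⟩ := Nat.exists_eq_add_of_le' hk
  have hpop : c.pop.k = n := by simp [pop, hn]
  simp only [cost, weight, hpop, hn, Nat.add_sub_cancel, Finset.sum_range_succ]
  simp only [pop, digit]
  ring

end Mountain

noncomputable def mountainLength (p q α : ℤ) : ℕ :=
  sInf {n | ∃ c : Mountain p q, c.value = α ∧ c.cost = n}

section mountainLength

variable {p q : ℤ}

lemma mountainLength_le_cost (c : Mountain p q) : mountainLength p q c.value ≤ c.cost :=
  Nat.sInf_le ⟨c, rfl, rfl⟩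

lemma exists_cost_eq_mountainLength (α : ℤ) :
    ∃ c : Mountain p q, c.value = α ∧ c.cost = mountainLength p q α :=
  Nat.sInf_mem (s := {n | ∃ c : Mountain p q, c.value = α ∧ c.cost = n})
    ⟨_, Mountain.const α, rfl, rfl⟩

lemma mountainLength_le_natAbs (α : ℤ) : mountainLength p q α ≤ α.natAbs :=
  (Mountain.cost_const α).symm ▸ mountainLength_le_cost (Mountain.const α)

lemma mountainLength_add_le (hp : p ≠ 0) (x y : ℤ) :
    mountainLength p q (x + y) ≤ mountainLength p q x + mountainLength p q y := by
  obtain ⟨c, rfl, hc⟩ := exists_cost_eq_mountainLength (p := p) (q := q) x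
  obtain ⟨c', rfl, hc'⟩ := exists_cost_eq_mountainLength (p := p) (q := q) y
  obtain ⟨d, hd, hcost⟩ := c.exists_value_add hp c'
  rw [← hd, ← hc, ← hc']
  exact (mountainLength_le_cost d).trans hcost

lemma mountainLength_q_mul_le (hp : p ≠ 0) (x : ℤ) :
    mountainLength p q (q * x) ≤ mountainLength p q (p * x) + 2 := by
  obtain ⟨c, hv, hc⟩ := exists_cost_eq_mountainLength (p := p) (q := q) (p * x)
  have hdvd : p ∣ c.value := ⟨x, hv⟩
  have := mountainLength_le_cost (c.push hdvd (q * x))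
  rw [Mountain.value_push, Mountain.cost_push, hv, Int.mul_ediv_cancel_left _ hp, sub_self] at this
  simpa [hc] using this

lemma mountainLength_p_mul_le (hp : p ≠ 0) (hpq : p.natAbs ≤ q.natAbs) (x : ℤ) :
    mountainLength p q (p * x) ≤ mountainLength p q (q * x) := by
  obtain ⟨c, hv, hc⟩ := exists_cost_eq_mountainLength (p := p) (q := q) (q * x)
  have hle : (p * x).natAbs ≤ (q * x).natAbs := by
    rw [Int.natAbs_mul, Int.natAbs_mul]
    exact Nat.mul_le_mul_right _ hpq
  rcases Nat.eq_zero_or_pos c.k with hk | hk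
  · rw [← hc, Mountain.cost_eq_natAbs_value hk, hv]
    exact (mountainLength_le_natAbs _).trans hle
  · obtain ⟨w, hw⟩ := c.dvd (c.k - 1) (by omega)
    have hpop : c.pop.value = p * w := hw
    have hdigit : c.digit (c.k - 1) = q * (x - w) := by
      rw [Mountain.digit, Nat.sub_add_cancel hk, hw, Int.mul_ediv_cancel_left _ hp]
      exact (congrArg (· - q * w) hv).trans (by ring)
    have hsplit : p * x = p * w + p * (x - w) := by ring
    have hle' : (p * (x - w)).natAbs ≤ (q * (x - w)).natAbs := by
      rw [Int.natAbs_mul, Int.natAbs_mul]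
      exact Nat.mul_le_mul_right _ hpq
    calc mountainLength p q (p * x)
        ≤ mountainLength p q (p * w) + mountainLength p q (p * (x - w)) :=
          hsplit ▸ mountainLength_add_le hp _ _
      _ ≤ c.pop.cost + (q * (x - w)).natAbs :=
          add_le_add (hpop ▸ mountainLength_le_cost c.pop)
            ((mountainLength_le_natAbs _).trans hle')
      _ ≤ mountainLength p q (q * x) := by
          rw [← hc, Mountain.cost_pop hk, hdigit]
          omega

end mountainLength

namespace Mountain

variable {p q : ℤ}

lemma exists_one_le_k_cost_le (hp : 0 < p) (hpq : p < q) {α : ℤ} (hα : 2 * q ≤ |α|) :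
    ∃ c : Mountain p q, 1 ≤ c.k ∧ c.value = α ∧ c.cost ≤ α.natAbs := by
  have hq : 0 < q := hp.trans hpq
  have hα0 : α ≠ 0 := by rintro rfl; rw [abs_zero] at hα; omega
  have hn : 2 ≤ |α| / q := Int.le_ediv_of_mul_le hq (by linarith)
  have hs : 0 ≤ |α| % q := Int.emod_nonneg _ hq.ne'
  have hdiv := Int.mul_ediv_add_emod |α| q
  set m := α.sign * (|α| / q)
  set r := α.sign * (|α| % q)
  have hdvd : p ∣ (const (p * m) : Mountain p q).value := ⟨m, rfl⟩
  refine ⟨(const (p * m)).push hdvd (q * m + r), le_rfl, ?_, ?_⟩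
  · rw [value_push, ← Int.sign_mul_abs α, ← hdiv]
    ring
  · have hm : |m| = |α| / q := by
      rw [abs_mul, Int.abs_sign_of_ne_zero hα0, one_mul, abs_of_nonneg (by omega)]
    have hr : |r| = |α| % q := by
      rw [abs_mul, Int.abs_sign_of_ne_zero hα0, one_mul, abs_of_nonneg hs]
    rw [cost_push, cost_const]
    simp only [const, value, Int.mul_ediv_cancel_left _ hp.ne', add_sub_cancel_left]
    zify
    rw [abs_mul, abs_of_pos hp, hm, hr]
    nlinarith

lemma exists_one_le_k_cost_eq_mountainLength (hp : 0 < p) (hpq : p < q) {α : ℤ}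
    (hα : 2 * q ≤ |α|) :
    ∃ c : Mountain p q, 1 ≤ c.k ∧ c.value = α ∧ c.cost = mountainLength p q α := by
  obtain ⟨c, hv, hc⟩ := exists_cost_eq_mountainLength (p := p) (q := q) α
  rcases Nat.eq_zero_or_pos c.k with hk | hk
  · obtain ⟨d, hdk, hdv, hdc⟩ := exists_one_le_k_cost_le hp hpq hα
    refine ⟨d, hdk, hdv, le_antisymm ?_ (hdv ▸ mountainLength_le_cost d)⟩
    rwa [← hc, cost_eq_natAbs_value hk, hv]
  · exact ⟨c, hk, hv, hc⟩

end Mountain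

namespace BS

def a (p q : ℤ) : BS p q := PresentedGroup.of false

def t (p q : ℤ) : BS p q := PresentedGroup.of true

variable {p q : ℤ}

lemma conj_t_a_zpow_p : t p q * a p q ^ p * (t p q)⁻¹ = a p q ^ q := by
  have h := PresentedGroup.one_of_mem (rels := bsRel p q) rfl
  simp only [map_mul, map_zpow, map_inv, zpow_neg] at h
  exact mul_inv_eq_one.mp h

lemma conj_t_a_zpow_p_mul (c : ℤ) : t p q * a p q ^ (p * c) * (t p q)⁻¹ = a p q ^ (q * c) := by
  rw [zpow_mul, zpow_mul, ← conj_zpow, conj_t_a_zpow_p]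

@[simp] lemma eval_nil : eval p q [] = 1 := rfl

@[simp] lemma eval_cons (l : Letter) (w : List Letter) :
    eval p q (l :: w) = evalLetter p q l * eval p q w := by
  simp [eval]

@[simp] lemma eval_append (u v : List Letter) : eval p q (u ++ v) = eval p q u * eval p q v := by
  simp [eval]

@[simp] lemma eval_flatten (L : List (List Letter)) :
    eval p q L.flatten = (L.map (eval p q)).prod := by
  induction L <;> simp [*]

@[simp] lemma evalLetter_a : evalLetter p q .a = a p q := rfl
@[simp] lemma evalLetter_A : evalLetter p q .A = (a p q)⁻¹ := rfl
@[simp] lemma evalLetter_t : evalLetter p q .t = t p q := rfl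
@[simp] lemma evalLetter_T : evalLetter p q .T = (t p q)⁻¹ := rfl

@[simp] lemma eval_replicate (n : ℕ) (l : Letter) :
    eval p q (List.replicate n l) = evalLetter p q l ^ n := by
  simp [eval]

@[simp] lemma eval_aPow (x : ℤ) : eval p q (aPow x) = a p q ^ x := by
  unfold aPow
  split_ifs with hx
  · simp [← zpow_natCast, Int.toNat_of_nonneg hx]
  · simp [← zpow_natCast, Int.toNat_of_nonneg (by omega : 0 ≤ -x)]

@[simp] lemma length_aPow (x : ℤ) : (aPow x).length = x.natAbs := by
  unfold aPow
  split_ifs <;> simp only [List.length_replicate] <;> omega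

lemma t_pow_mul_a_zpow_mul_prod_eq (hp : p ≠ 0) (k : ℕ) (β : ℕ → ℤ)
    (hβ : ∀ i < k, p ∣ β i) :
    t p q ^ k * a p q ^ β 0 *
      (List.ofFn fun i : Fin k => (t p q)⁻¹ * a p q ^ (β (i + 1) - q * (β i / p))).prod =
      a p q ^ β k := by
  induction k generalizing β with
  | zero => simp
  | succ k ih =>
    obtain ⟨c, hc⟩ := hβ 0 k.succ_pos
    have hlower :
        t p q * a p q ^ β 0 * (t p q)⁻¹ * a p q ^ (β 1 - q * (β 0 / p)) = a p q ^ β 1 := by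
      rw [hc, conj_t_a_zpow_p_mul, Int.mul_ediv_cancel_left _ hp, ← zpow_add, add_sub_cancel]
    rw [List.ofFn_succ, List.prod_cons, pow_succ]
    simp only [Fin.val_zero, Fin.val_succ]
    rw [← ih (fun i => β (i + 1)) fun i hi => hβ (i + 1) (by omega), ← hlower]
    group

end BS

namespace Mountain

variable {p q : ℤ}

lemma eval_word (hp : p ≠ 0) (c : Mountain p q) : eval p q c.word = BS.a p q ^ c.value := by
  simpa [word, List.map_ofFn, Function.comp_def, digit, value, mul_assoc]
    using BS.t_pow_mul_a_zpow_mul_prod_eq (q := q) hp c.k c.β c.dvd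

lemma length_word (c : Mountain p q) : c.word.length = c.cost := by
  simp only [word, List.length_append, List.length_replicate, BS.length_aPow, List.length_flatten,
    List.map_ofFn, List.sum_ofFn, Function.comp_apply, List.length_cons,
    Fin.sum_univ_eq_sum_range (fun i => (c.digit i).natAbs + 1), Finset.sum_add_distrib,
    Finset.sum_const, Finset.card_range, smul_eq_mul, mul_one, cost, weight]
  ring

end Mountain

namespace BS

variable {p q : ℤ}

/-- A pair `(u, x)` stands for the syllable `t^u a^x`. -/
def syllablesProd (p q : ℤ) (L : List (ℤˣ × ℤ)) : BS p q :=
  (L.map fun e => t p q ^ (e.1 : ℤ) * a p q ^ e.2).prod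

@[simp] lemma syllablesProd_nil : syllablesProd p q [] = 1 := rfl

@[simp] lemma syllablesProd_cons (e : ℤˣ × ℤ) (L : List (ℤˣ × ℤ)) :
    syllablesProd p q (e :: L) = t p q ^ (e.1 : ℤ) * a p q ^ e.2 * syllablesProd p q L := rfl

@[simp] lemma syllablesProd_append (L L' : List (ℤˣ × ℤ)) :
    syllablesProd p q (L ++ L') = syllablesProd p q L * syllablesProd p q L' := by
  simp [syllablesProd]

def conjSrc (p q : ℤ) (u : ℤˣ) : ℤ := if u = 1 then p else q

def conjTgt (p q : ℤ) (u : ℤˣ) : ℤ := if u = 1 then q else p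

lemma conj_t_zpow_a_zpow_conjSrc_mul (u : ℤˣ) (c : ℤ) :
    t p q ^ (u : ℤ) * a p q ^ (conjSrc p q u * c) * t p q ^ (-(u : ℤ)) =
      a p q ^ (conjTgt p q u * c) := by
  rcases Int.units_eq_one_or u with rfl | rfl
  · simpa [conjSrc, conjTgt] using conj_t_a_zpow_p_mul c
  · simp only [conjSrc, conjTgt, if_neg (by decide : (-1 : ℤˣ) ≠ 1), Units.val_neg,
      Units.val_one, neg_neg, zpow_neg, zpow_one]
    rw [← conj_t_a_zpow_p_mul c]
    group

def scaleHom (n : ℤ) : Multiplicative ℤ →* Multiplicative ℤ :=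
  AddMonoidHom.toMultiplicative (AddMonoidHom.mulLeft n)

lemma scaleHom_injective {n : ℤ} (hn : n ≠ 0) : Function.Injective (scaleHom n) :=
  fun _ _ h =>
    Multiplicative.toAdd.injective (mul_left_cancel₀ hn (congrArg Multiplicative.toAdd h))

lemma mem_range_scaleHom {n x : ℤ} :
    Multiplicative.ofAdd x ∈ (scaleHom n).range ↔ n ∣ x :=
  ⟨fun ⟨y, hy⟩ => ⟨y.toAdd, (congrArg Multiplicative.toAdd hy).symm⟩,
    fun ⟨y, hy⟩ => ⟨Multiplicative.ofAdd y, congrArg Multiplicative.ofAdd hy.symm⟩⟩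

noncomputable def scaleEquiv (hp : p ≠ 0) (hq : q ≠ 0) :
    (scaleHom p).range ≃* (scaleHom q).range :=
  (MonoidHom.ofInjective (scaleHom_injective hp)).symm.trans
    (MonoidHom.ofInjective (scaleHom_injective hq))

lemma scaleEquiv_ofInjective (hp : p ≠ 0) (hq : q ≠ 0) (y : Multiplicative ℤ) :
    (scaleEquiv hp hq (MonoidHom.ofInjective (scaleHom_injective hp) y) : Multiplicative ℤ) =
      scaleHom q y := by
  rw [scaleEquiv, MulEquiv.trans_apply, MulEquiv.symm_apply_apply, MonoidHom.ofInjective_apply]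

/-- `BS(p,q)` as an HNN extension of `ℤ`, with stable letter conjugating `pℤ` onto `qℤ`. -/
abbrev HNNModel (hp : p ≠ 0) (hq : q ≠ 0) :=
  HNNExtension (Multiplicative ℤ) (scaleHom p).range (scaleHom q).range (scaleEquiv hp hq)

section HNN

variable (hp : p ≠ 0) (hq : q ≠ 0)

lemma HNNModel.of_ofAdd_one_zpow (x : ℤ) :
    (HNNExtension.of (Multiplicative.ofAdd 1) : HNNModel hp hq) ^ x =
      HNNExtension.of (Multiplicative.ofAdd x) := by
  rw [← map_zpow, ← ofAdd_zsmul, smul_eq_mul, mul_one]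

lemma HNNModel.lift_bsRel :
    ∀ r ∈ bsRel p q, FreeGroup.lift (fun b => if b then (HNNExtension.t : HNNModel hp hq)
      else HNNExtension.of (Multiplicative.ofAdd 1)) r = 1 := by
  rintro _ rfl
  have hconj : (HNNExtension.t : HNNModel hp hq) * HNNExtension.of (Multiplicative.ofAdd p) =
      HNNExtension.of (Multiplicative.ofAdd q) * HNNExtension.t := by
    have h := HNNExtension.t_mul_of (φ := scaleEquiv hp hq)
      (MonoidHom.ofInjective (scaleHom_injective hp) (Multiplicative.ofAdd 1))
    rw [scaleEquiv_ofInjective, MonoidHom.ofInjective_apply] at h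
    simpa [scaleHom] using h
  simp only [map_mul, map_zpow, map_inv, FreeGroup.lift_apply_of, if_true, Bool.false_eq_true,
    if_false]
  rw [HNNModel.of_ofAdd_one_zpow hp hq p, HNNModel.of_ofAdd_one_zpow hp hq (-q), hconj,
    mul_inv_cancel_right, ← map_mul, ← ofAdd_add, add_neg_cancel, ofAdd_zero, map_one]

noncomputable def toHNNModel : BS p q →* HNNModel hp hq :=
  PresentedGroup.toGroup (HNNModel.lift_bsRel hp hq)

lemma toHNNModel_t : toHNNModel hp hq (t p q) = HNNExtension.t := PresentedGroup.toGroup.of _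

lemma toHNNModel_a_zpow (x : ℤ) :
    toHNNModel hp hq (a p q ^ x) = HNNExtension.of (Multiplicative.ofAdd x) := by
  rw [map_zpow, a, toHNNModel, PresentedGroup.toGroup.of]
  exact HNNModel.of_ofAdd_one_zpow hp hq x

lemma toHNNModel_syllablesProd (L : List (ℤˣ × ℤ)) :
    toHNNModel hp hq (syllablesProd p q L) =
      ((L.map (Prod.map id Multiplicative.ofAdd)).map
        fun e => (HNNExtension.t : HNNModel hp hq) ^ (e.1 : ℤ) * HNNExtension.of e.2).prod := by
  simp [syllablesProd, map_list_prod, Function.comp_def, toHNNModel_t, toHNNModel_a_zpow]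

end HNN

lemma a_zpow_injective (hp : p ≠ 0) (hq : q ≠ 0) :
    Function.Injective (a p q ^ · : ℤ → BS p q) :=
  fun x y h => by
    have := congrArg (toHNNModel hp hq) h
    simp only [toHNNModel_a_zpow] at this
    exact Multiplicative.ofAdd.injective (HNNExtension.of_injective (φ := scaleEquiv hp hq) this)

lemma conjSrc_dvd_of_mem_toSubgroup {u : ℤˣ} {x : ℤ}
    (h : Multiplicative.ofAdd x ∈
      HNNExtension.toSubgroup (scaleHom p).range (scaleHom q).range u) :
    conjSrc p q u ∣ x := by
  unfold HNNExtension.toSubgroup conjSrc at *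
  split_ifs at * <;> exact mem_range_scaleHom.mp h

/-- Britton's lemma, for pinches `t^u a^x t^(-u)` with `conjSrc p q u ∣ x`. -/
lemma eq_nil_of_isChain (hp : p ≠ 0) (hq : q ≠ 0) {L : List (ℤˣ × ℤ)}
    (hL : L.IsChain fun e e' => conjSrc p q e.1 ∣ e.2 → e.1 = e'.1) {b α : ℤ}
    (h : a p q ^ b * syllablesProd p q L = a p q ^ α) : L = [] := by
  let w : HNNExtension.NormalWord.ReducedWord (Multiplicative ℤ) (scaleHom p).range
      (scaleHom q).range :=
    ⟨Multiplicative.ofAdd b, L.map (Prod.map id Multiplicative.ofAdd), List.isChain_map _ |>.mpr <|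
      hL.imp fun _ _ hr hmem => hr (conjSrc_dvd_of_mem_toSubgroup hmem)⟩
  have hw : w.prod (scaleEquiv hp hq) = HNNExtension.of (Multiplicative.ofAdd α) := by
    rw [← toHNNModel_a_zpow hp hq, ← h, map_mul, toHNNModel_a_zpow, toHNNModel_syllablesProd]
    rfl
  simpa [w] using
    HNNExtension.ReducedWord.toList_eq_nil_of_mem_of_range (φ := scaleEquiv hp hq) w ⟨_, hw.symm⟩

end BS

namespace BS

variable {p q : ℤ}

/-- The potential of a syllable list: it bounds the length of the word it comes from, and collapsing
a pinch does not increase it. -/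
noncomputable def syllablesCost (p q : ℤ) (L : List (ℤˣ × ℤ)) : ℕ :=
  (L.map fun e => 1 + mountainLength p q e.2).sum

@[simp] lemma syllablesCost_nil : syllablesCost p q [] = 0 := rfl

@[simp] lemma syllablesCost_cons (e : ℤˣ × ℤ) (L : List (ℤˣ × ℤ)) :
    syllablesCost p q (e :: L) = 1 + mountainLength p q e.2 + syllablesCost p q L := rfl

@[simp] lemma syllablesCost_append (L L' : List (ℤˣ × ℤ)) :
    syllablesCost p q (L ++ L') = syllablesCost p q L + syllablesCost p q L' := by
  simp [syllablesCost]

lemma syllablesProd_pinch (u : ℤˣ) (c y : ℤ) (S : List (ℤˣ × ℤ)) :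
    syllablesProd p q ((u, conjSrc p q u * c) :: (-u, y) :: S) =
      a p q ^ (conjTgt p q u * c + y) * syllablesProd p q S := by
  rw [zpow_add, ← conj_t_zpow_a_zpow_conjSrc_mul u c]
  simp only [syllablesProd_cons, Units.val_neg]
  group

lemma mountainLength_conjTgt_mul_le (hp : p ≠ 0) (hpq : p.natAbs ≤ q.natAbs) (u : ℤˣ)
    (c : ℤ) :
    mountainLength p q (conjTgt p q u * c) ≤ mountainLength p q (conjSrc p q u * c) + 2 := by
  rcases Int.units_eq_one_or u with rfl | rfl
  · exact mountainLength_q_mul_le hp c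
  · exact (mountainLength_p_mul_le hp hpq c).trans (Nat.le_add_right _ _)

lemma exists_syllables_mul_a_zpow (hp : p ≠ 0) (b z : ℤ) (P : List (ℤˣ × ℤ)) :
    ∃ (b' : ℤ) (P' : List (ℤˣ × ℤ)), P'.length = P.length ∧
      a p q ^ b' * syllablesProd p q P' = a p q ^ b * syllablesProd p q P * a p q ^ z ∧
      mountainLength p q b' + syllablesCost p q P' ≤
        mountainLength p q b + syllablesCost p q P + mountainLength p q z := by
  rcases List.eq_nil_or_concat P with rfl | ⟨P, e, rfl⟩
  · exact ⟨b + z, [], rfl, by simp [zpow_add], by simpa using mountainLength_add_le hp b z⟩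
  · rw [List.concat_eq_append]
    refine ⟨b, P ++ [(e.1, e.2 + z)], by simp, by simp [zpow_add, mul_assoc], ?_⟩
    have := mountainLength_add_le (q := q) hp e.2 z
    simp only [syllablesCost_append, syllablesCost_cons, syllablesCost_nil]
    omega

theorem mountainLength_le_of_mul_syllablesProd_eq (hp : p ≠ 0) (hpq : p.natAbs ≤ q.natAbs)
    (L : List (ℤˣ × ℤ)) {b α : ℤ} (h : a p q ^ b * syllablesProd p q L = a p q ^ α) :
    mountainLength p q α ≤ mountainLength p q b + syllablesCost p q L := by
  have hq : q ≠ 0 := by omega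
  induction hn : L.length using Nat.strong_induction_on generalizing L b with
  | _ n ih =>
  by_cases hL : L.IsChain fun e e' => conjSrc p q e.1 ∣ e.2 → e.1 = e'.1
  · obtain rfl := eq_nil_of_isChain hp hq hL h
    obtain rfl := a_zpow_injective hp hq (by simpa using h)
    simp
  obtain ⟨⟨u, x⟩, ⟨u', y⟩, P, S, rfl, hdvd, hne⟩ : ∃ e e' P S, L = P ++ e :: e' :: S ∧
      conjSrc p q e.1 ∣ e.2 ∧ e.1 ≠ e'.1 := by
    simpa [List.isChain_iff_forall_rel_of_append_cons_cons] using hL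
  obtain ⟨c, rfl⟩ : conjSrc p q u ∣ x := hdvd
  replace hne : u ≠ u' := hne
  have hu' : u' = -u := by
    rcases Int.units_eq_one_or u with rfl | rfl <;>
      rcases Int.units_eq_one_or u' with rfl | rfl <;> simp_all
  subst hu'
  -- collapse the pinch and absorb the resulting power of `a` into the syllable before it
  obtain ⟨b', P', hlen, hP', hcost⟩ :=
    exists_syllables_mul_a_zpow (q := q) hp b (conjTgt p q u * c + y) P
  have hrec := ih (P' ++ S).length (by simp [← hn, hlen]) (P' ++ S)
    (by rw [syllablesProd_append, ← mul_assoc, hP', mul_assoc, ← syllablesProd_pinch, ← h,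
      syllablesProd_append, mul_assoc]) rfl
  have htgt := mountainLength_conjTgt_mul_le hp hpq u c
  have hadd := mountainLength_add_le (q := q) hp (conjTgt p q u * c) y
  simp only [syllablesCost_append, syllablesCost_cons] at hrec ⊢
  omega

lemma exists_syllables (hp : p ≠ 0) (w : List Letter) :
    ∃ (b : ℤ) (L : List (ℤˣ × ℤ)), a p q ^ b * syllablesProd p q L = eval p q w ∧
      mountainLength p q b + syllablesCost p q L ≤ w.length := by
  have h0 : mountainLength p q 0 = 0 := Nat.le_zero.mp (mountainLength_le_natAbs 0)
  have h1 (s : ℤ) (hs : s.natAbs = 1) (b : ℤ) :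
      mountainLength p q (s + b) ≤ mountainLength p q b + 1 :=
    (mountainLength_add_le hp s b).trans
      (by have := mountainLength_le_natAbs (p := p) (q := q) s; omega)
  induction w with
  | nil => exact ⟨0, [], by simp, by simp [h0]⟩
  | cons l w ih =>
    obtain ⟨b, L, h, hlen⟩ := ih
    cases l with
    | a =>
      refine ⟨1 + b, L, by simp [zpow_add, mul_assoc, h], ?_⟩
      have := h1 1 rfl b
      simp only [List.length_cons]
      omega
    | A =>
      refine ⟨-1 + b, L, by simp [zpow_add, mul_assoc, h], ?_⟩
      have := h1 (-1) rfl b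
      simp only [List.length_cons]
      omega
    | t =>
      refine ⟨0, (1, b) :: L, by simp [← h, mul_assoc], ?_⟩
      simp only [syllablesCost_cons, h0, List.length_cons]
      omega
    | T =>
      refine ⟨0, (-1, b) :: L, by simp [← h, mul_assoc], ?_⟩
      simp only [syllablesCost_cons, h0, List.length_cons]
      omega

lemma mountainLength_le_length (hp : p ≠ 0) (hpq : p.natAbs ≤ q.natAbs) {w : List Letter}
    {α : ℤ} (hw : eval p q w = a p q ^ α) : mountainLength p q α ≤ w.length := by
  obtain ⟨b, L, h, hlen⟩ := exists_syllables hp w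
  exact (mountainLength_le_of_mul_syllablesProd_eq hp hpq L (h.trans hw)).trans hlen

end BS

lemma Mountain.geodesic_word {p q : ℤ} (hp : p ≠ 0) (hpq : p.natAbs ≤ q.natAbs)
    (c : Mountain p q) (hc : c.cost = mountainLength p q c.value) : Geodesic p q c.word := by
  intro v hv
  rw [length_word, hc]
  exact BS.mountainLength_le_length hp hpq (hv.trans (c.eval_word hp))

theorem horocyclic_large_geodesic_uses_t (p q α : ℤ) (hp : 1 ≤ p) (hpq : p < q)
    (hα : 2 * q ≤ |α|) :
    ∃ (k : ℕ) (α0 : ℤ) (γs : Fin k → ℤ),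
      1 ≤ k ∧
      eval p q (List.replicate k Letter.t ++ aPow α0 ++
        (List.ofFn fun i : Fin k => Letter.T :: aPow (γs i)).flatten) = eval p q (aPow α) ∧
      Geodesic p q (List.replicate k Letter.t ++ aPow α0 ++
        (List.ofFn fun i : Fin k => Letter.T :: aPow (γs i)).flatten) ∧
      Letter.t ∈ (List.replicate k Letter.t ++ aPow α0 ++
        (List.ofFn fun i : Fin k => Letter.T :: aPow (γs i)).flatten) := by
  obtain ⟨c, hk, rfl, hc⟩ := Mountain.exists_one_le_k_cost_eq_mountainLength (by omega) hpq hα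
  refine ⟨c.k, c.β 0, fun i => c.digit i, hk, ?_, c.geodesic_word (by omega) (by omega) hc, ?_⟩
  · exact (c.eval_word (by omega)).trans (BS.eval_aPow _).symm
  · exact List.mem_append_left _ <| List.mem_append_left _ <|
      List.mem_replicate.mpr ⟨by omega, rfl⟩
end

section
/- Let p, q be integers with 1 ≤ p < q and let α ∈ ℤ with |α| ≥ 3q. Then the geodesic length of the element a^α in BS(p,q) is strictly smaller than |α|; equivalently, if the geodesic length of a^α equals |α| then |α| < 3q. -/
/-!
Write `|α| = m q + r` with `0 ≤ r < q`, so `m ≥ 3`. The relation `t a^{mp} t⁻¹ = a^{mq}` turns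
`a^α` into the word `t a^{±mp} t⁻¹ a^{±r}` of length `mp + r + 2`, which is shorter than
`mq + r = |α|` because `m (q - p) ≥ 3`.
-/

section

variable (p q : ℤ)

@[simp]
lemma eval_append (u v : List Letter) : eval p q (u ++ v) = eval p q u * eval p q v := by
  simp [eval]

lemma eval_aPow (x : ℤ) : eval p q (aPow x) = (PresentedGroup.of false : BS p q) ^ x := by
  unfold aPow
  split_ifs with hx
  · simp [eval, evalLetter, ← zpow_natCast, Int.toNat_of_nonneg hx]
  · simp [eval, evalLetter, ← zpow_natCast, Int.toNat_of_nonneg (by omega : 0 ≤ -x)]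

@[simp]
lemma length_aPow (x : ℤ) : (aPow x).length = x.natAbs := by
  unfold aPow; split_ifs <;> simp <;> omega

lemma geodesicLength_le_length {g : BS p q} {w : List Letter} (hw : eval p q w = g) :
    geodesicLength p q g ≤ w.length :=
  Nat.sInf_le ⟨w, hw, rfl⟩

lemma of_true_mul_zpow_mul_inv (m : ℤ) :
    (PresentedGroup.of true : BS p q) * PresentedGroup.of false ^ (p * m) *
      (PresentedGroup.of true)⁻¹ = PresentedGroup.of false ^ (q * m) := by
  have hrel : (PresentedGroup.of true : BS p q) * PresentedGroup.of false ^ p *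
      (PresentedGroup.of true)⁻¹ = PresentedGroup.of false ^ q :=
    PresentedGroup.mk_eq_mk_of_mul_inv_mem (by rw [← zpow_neg]; rfl)
  rw [zpow_mul, zpow_mul, ← hrel, conj_zpow]

lemma eval_conj_aPow_append_aPow (m r : ℤ) :
    eval p q ([Letter.t] ++ aPow (p * m) ++ [Letter.T] ++ aPow r) =
      (PresentedGroup.of false : BS p q) ^ (q * m + r) := by
  simp only [eval_append, eval_aPow, zpow_add, ← of_true_mul_zpow_mul_inv p q m]
  simp [eval, evalLetter]

lemma geodesicLength_zpow_le (m r : ℤ) :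
    geodesicLength p q ((PresentedGroup.of false : BS p q) ^ (q * m + r)) ≤
      (p * m).natAbs + r.natAbs + 2 := by
  refine (geodesicLength_le_length p q (eval_conj_aPow_append_aPow p q m r)).trans ?_
  simp only [List.length_append, length_aPow, List.length_singleton]
  omega

end

theorem horocyclic_large_not_unary_geodesic (p q α : ℤ) (hp : 1 ≤ p) (hpq : p < q)
    (hα : 3 * q ≤ |α|) :
    geodesicLength p q (eval p q (aPow α)) < α.natAbs := by
  have hq : 0 < q := by omega
  set m := |α| / q
  set r := |α| % q
  have hm : 3 ≤ m := (Int.le_ediv_iff_mul_le hq).2 hα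
  have hr : 0 ≤ r := Int.emod_nonneg _ hq.ne'
  have hdecomp : q * (α.sign * m) + α.sign * r = α := by
    rw [mul_left_comm, ← mul_add, Int.mul_ediv_add_emod, Int.sign_mul_abs]
  have hshort : p * m + r + 2 < |α| := by
    have hgap : p * m + 3 ≤ q * m := by nlinarith
    have hdiv : q * m + r = |α| := Int.mul_ediv_add_emod _ _
    omega
  have hpm : 0 ≤ p * m := by positivity
  have hsign : α.sign.natAbs = 1 := Int.natAbs_sign_of_ne_zero (by rintro rfl; simp at hα; omega)
  have hbound := geodesicLength_zpow_le p q (α.sign * m) (α.sign * r)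
  rw [hdecomp, ← eval_aPow, mul_left_comm, Int.natAbs_mul α.sign, Int.natAbs_mul α.sign,
    hsign] at hbound
  have := Int.natCast_natAbs α
  omega
end
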